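/- Let R be a commutative artinian principal ideal ring. Then R is injective as a module over itself. -/

import Mathlib

/-!
By Baer's criterion, and since every ideal is principal, it suffices that `a ∣ b` whenever
`ann a ≤ ann b`. This property passes to finite products, so by the structure theorem for
artinian rings we may assume `R` local. Its maximal ideal is then `(π)` with `π` nilpotent,
every element is a unit times a power of `π`, and for powers of `π` the claim follows by
comparing exponents with the nilpotency class of `π`.
-/

open IsLocalRing

/-- A map `(a) → R` is determined by the image `b` of `a`; it is well defined iff
`ann a ≤ ann b`, and it extends to `R` iff `a ∣ b`. -/
def DvdOfAnnLE (R : Type*) [CommMonoidWithZero R] : Prop :=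
  ∀ a b : R, (∀ x, x * a = 0 → x * b = 0) → a ∣ b

theorem pow_dvd_pow_of_annihilator_le {M : Type*} [CommMonoidWithZero M] {π : M}
    (hπ : IsNilpotent π) {i j : ℕ} (h : ∀ x, x * π ^ j = 0 → x * π ^ i = 0) :
    π ^ j ∣ π ^ i := by
  have hN : π ^ (nilpotencyClass π - j + i) = 0 := by
    rw [pow_add]
    exact h _ <| by rw [← pow_add]; exact pow_eq_zero_of_le (by omega) (pow_nilpotencyClass hπ)
  have hle : nilpotencyClass π ≤ nilpotencyClass π - j + i := Nat.sInf_le hN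
  rcases le_or_gt j i with hji | hij
  · exact pow_dvd_pow π hji
  · have : π ^ i = 0 := pow_eq_zero_of_le (by omega) (pow_nilpotencyClass hπ)
    exact this ▸ dvd_zero _

theorem IsLocalRing.exists_eq_unit_mul_pow {R : Type*} [CommRing R] [IsLocalRing R] {π : R}
    (hπ : maximalIdeal R = Ideal.span {π}) (hnil : IsNilpotent π) (c : R) :
    ∃ (u : Rˣ) (j : ℕ), c = u * π ^ j := by
  -- Divide `c` by `π` until the quotient is a unit; this stops because `π ^ n = 0`.
  have unit_mul_pow_or_dvd : ∀ k, (∃ (u : Rˣ) (j : ℕ), c = u * π ^ j) ∨ π ^ k ∣ c := by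
    intro k
    induction k with
    | zero => exact .inr (by simp)
    | succ k ih =>
      rcases ih with h | ⟨d, rfl⟩
      · exact .inl h
      by_cases hd : IsUnit d
      · obtain ⟨u, rfl⟩ := hd
        exact .inl ⟨u, k, mul_comm _ _⟩
      · obtain ⟨e, rfl⟩ := Ideal.mem_span_singleton.mp (hπ ▸ (mem_maximalIdeal d).mpr hd)
        exact .inr ⟨e, by ring⟩
  obtain ⟨n, hn⟩ := hnil
  rcases unit_mul_pow_or_dvd n with h | h
  · exact h
  · rw [hn, zero_dvd_iff] at h
    exact ⟨1, n, by rw [h, hn, mul_zero]⟩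

namespace DvdOfAnnLE

theorem of_mulEquiv {R S : Type*} [CommMonoidWithZero R] [CommMonoidWithZero S] (e : R ≃* S)
    (hS : DvdOfAnnLE S) : DvdOfAnnLE R := by
  intro a b hab
  obtain ⟨r, hr⟩ := hS (e a) (e b) fun x hx => by
    simpa using congrArg e (hab (e.symm x) (e.injective (by simpa using hx)))
  exact ⟨e.symm r, e.injective (by simpa using hr)⟩

theorem pi {ι : Type*} {R : ι → Type*} [∀ i, CommMonoidWithZero (R i)]
    (h : ∀ i, DvdOfAnnLE (R i)) : DvdOfAnnLE (∀ i, R i) := by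
  classical
  intro a b hab
  have (i : ι) : a i ∣ b i := h i _ _ fun x hx => by
    simpa using congrFun (hab (Pi.single i x) (by rw [← Pi.single_mul_left, hx, Pi.single_zero])) i
  choose r hr using this
  exact ⟨r, funext hr⟩

theorem of_isLocalRing {R : Type*} [CommRing R] [IsLocalRing R] [Ring.KrullDimLE 0 R]
    (h : (maximalIdeal R).IsPrincipal) : DvdOfAnnLE R := by
  obtain ⟨π, hπ⟩ := h
  have hnil : IsNilpotent π :=
    Ring.KrullDimLE.isNilpotent_iff_mem_maximalIdeal.mpr (hπ ▸ Ideal.mem_span_singleton_self π)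
  have ann_unit_mul (u : Rˣ) (x y : R) : x * (u * y) = 0 ↔ x * y = 0 := by
    rw [mul_left_comm, Units.mul_right_eq_zero]
  intro a b hab
  obtain ⟨u, j, rfl⟩ := exists_eq_unit_mul_pow hπ hnil a
  obtain ⟨v, i, rfl⟩ := exists_eq_unit_mul_pow hπ hnil b
  have : π ^ j ∣ π ^ i := pow_dvd_pow_of_annihilator_le hnil fun x hx =>
    (ann_unit_mul v x _).mp (hab x ((ann_unit_mul u x _).mpr hx))
  exact Units.mul_left_dvd.mpr (Units.dvd_mul_left.mpr this)

theorem of_isArtinianRing (R : Type*) [CommRing R] [IsArtinianRing R] [IsPrincipalIdealRing R] :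
    DvdOfAnnLE R := by
  let e := MaximalSpectrum.toPiLocalizationEquiv R
  refine of_mulEquiv e.toMulEquiv (pi fun I => of_isLocalRing ?_)
  have : Function.Surjective ((Pi.evalRingHom _ I).comp e.toRingHom) :=
    (Function.surjective_eval I).comp e.surjective
  exact (IsPrincipalIdealRing.of_surjective _ this).principal _

theorem baer {R : Type*} [CommRing R] [IsPrincipalIdealRing R] (h : DvdOfAnnLE R) :
    Module.Baer R R := by
  intro I g
  obtain ⟨a, rfl⟩ := (IsPrincipalIdealRing.principal I).principal
  have ha : a ∈ Submodule.span R {a} := Submodule.mem_span_singleton_self a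
  obtain ⟨r, hr⟩ := h a (g ⟨a, ha⟩) fun x hx => by
    rw [← smul_eq_mul, ← map_smul, show x • (⟨a, ha⟩ : Submodule.span R {a}) = 0 from
      Subtype.ext hx, map_zero]
  refine ⟨LinearMap.mulRight R r, fun x hx => ?_⟩
  obtain ⟨s, rfl⟩ := Submodule.mem_span_singleton.mp hx
  rw [LinearMap.mulRight_apply, smul_mul_assoc, ← hr, ← map_smul]
  rfl

end DvdOfAnnLE

theorem artinian_pir_self_injective (R : Type*) [CommRing R] [IsArtinianRing R]
    [IsPrincipalIdealRing R] : Module.Injective R R :=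
  (DvdOfAnnLE.of_isArtinianRing R).baer.injective
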